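/- arXiv:2603.25014 — 3 statements merged into one kernel-verified Lean document; each statement's English description precedes it below -/
import Mathlib

section
/- The 3rd division polynomial of E: y² = x³ − 264u²x + 1694u³ factors as ψ₃(x) = 3(x² − 22ux + 132u²)(x² + 22ux − 176u²), and for nonzero rational u the two quadratic factors have discriminants −44u² and 1188u², neither of which is a rational square; hence E has no 3-torsion point with rational x-coordinate. -/
lemma sq_add_mul_add_ne_zero_of_not_exists_sq {R : Type*} [CommRing R] {b c : R}
    (h : ¬∃ r : R, r ^ 2 = b ^ 2 - 4 * c) (x : R) : x ^ 2 + b * x + c ≠ 0 := by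
  have := quadratic_ne_zero_of_discrim_ne_sq (a := 1) (b := b) (c := c)
    (fun s hs => h ⟨s, by rw [← hs, discrim, mul_one]⟩) x
  rwa [one_mul, ← sq] at this

lemma not_exists_sq_eq_mul_sq {K : Type*} [Field K] {c u : K} (hc : ¬IsSquare c) (hu : u ≠ 0) :
    ¬∃ r : K, r ^ 2 = c * u ^ 2 := by
  rintro ⟨r, hr⟩
  exact hc ⟨r / u, by field_simp; linear_combination -hr⟩

/-- The third division polynomial of `y² = x³ - 264u²x + 1694u³` factors as
`3(x² - 22ux + 132u²)(x² + 22ux - 176u²)`, the two quadratic factors have discriminants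
`-44u²` and `1188u²`, neither of which is a rational square; hence ψ₃ has no rational root
(no 3-torsion point with rational x-coordinate). -/
theorem stmt_6 (u : ℚ) (hu : u ≠ 0) :
    (∀ x : ℚ, 3 * x ^ 4 + 6 * (-264 * u ^ 2) * x ^ 2 + 12 * (1694 * u ^ 3) * x
        - (-264 * u ^ 2) ^ 2
      = 3 * (x ^ 2 - 22 * u * x + 132 * u ^ 2) * (x ^ 2 + 22 * u * x - 176 * u ^ 2)) ∧
    ((-22 * u) ^ 2 - 4 * (132 * u ^ 2) = -44 * u ^ 2) ∧
    ((22 * u) ^ 2 - 4 * (-176 * u ^ 2) = 1188 * u ^ 2) ∧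
    (¬ ∃ r : ℚ, r ^ 2 = -44 * u ^ 2) ∧
    (¬ ∃ r : ℚ, r ^ 2 = 1188 * u ^ 2) ∧
    ∀ x : ℚ, 3 * x ^ 4 + 6 * (-264 * u ^ 2) * x ^ 2 + 12 * (1694 * u ^ 3) * x
        - (-264 * u ^ 2) ^ 2 ≠ 0 := by
  have factor : ∀ x : ℚ, 3 * x ^ 4 + 6 * (-264 * u ^ 2) * x ^ 2 + 12 * (1694 * u ^ 3) * x
      - (-264 * u ^ 2) ^ 2
      = 3 * (x ^ 2 - 22 * u * x + 132 * u ^ 2) * (x ^ 2 + 22 * u * x - 176 * u ^ 2) :=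
    fun x => by ring
  have disc₁ : (-22 * u) ^ 2 - 4 * (132 * u ^ 2) = -44 * u ^ 2 := by ring
  have disc₂ : (22 * u) ^ 2 - 4 * (-176 * u ^ 2) = 1188 * u ^ 2 := by ring
  -- `norm_num` decides `IsSquare` on ℚ: `-44` is negative and `1188 = 2² · 3³ · 11`.
  have nonsq₁ : ¬∃ r : ℚ, r ^ 2 = -44 * u ^ 2 := not_exists_sq_eq_mul_sq (by norm_num) hu
  have nonsq₂ : ¬∃ r : ℚ, r ^ 2 = 1188 * u ^ 2 := not_exists_sq_eq_mul_sq (by norm_num) hu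
  refine ⟨factor, disc₁, disc₂, nonsq₁, nonsq₂, fun x => ?_⟩
  have root₁ : x ^ 2 - 22 * u * x + 132 * u ^ 2 ≠ 0 := by
    convert sq_add_mul_add_ne_zero_of_not_exists_sq (disc₁ ▸ nonsq₁) x using 1; ring
  have root₂ : x ^ 2 + 22 * u * x - 176 * u ^ 2 ≠ 0 := by
    convert sq_add_mul_add_ne_zero_of_not_exists_sq (disc₂ ▸ nonsq₂) x using 1; ring
  rw [factor]
  exact mul_ne_zero (mul_ne_zero three_ne_zero root₁) root₂
end

section
/- Let u be a nonzero integer and p a prime of good reduction for E_u: y² = x³ − 9u²x + 12u³ such that 3 is a cubic residue modulo p, i.e., 3 ≡ m³ (mod p) for some integer m. Then (−mu − m²u, 0) is a 2-torsion point of E_u over 𝔽_p; in particular #E_u(𝔽_p) is even. -/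
/-!
Over a finite field of odd characteristic, `y² = a` has an odd number of solutions exactly when
`a = 0`, so the number of affine points of `y² = f(x)` has the parity of the number of roots of `f`.
For `f = x³ + ax + b` with a root `x₀`, the discriminant factors as
`4a³ + 27b² = (3x₀² + a)² (3x₀² + 4a)`: if it is nonzero, `x₀` is a simple root and the cofactor
quadratic has nonzero discriminant, hence `0` or `2` roots. So `f` has an odd number of roots and,
with the point at infinity, `#E(𝔽_p)` is even.
-/

section RootParity

variable {F : Type*} [Field F] [Fintype F]

lemma card_sq_eq_mod_two [DecidableEq F] (hF : ringChar F ≠ 2) (a : F) :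
    Nat.card {y : F // y ^ 2 = a} % 2 = if a = 0 then 1 else 0 := by
  have hc := quadraticChar_card_sqrts hF a
  rw [Set.toFinset_card, ← Nat.card_eq_fintype_card] at hc
  change (Nat.card {y : F // y ^ 2 = a} : ℤ) = _ at hc
  split_ifs with ha
  · subst ha
    rw [MulChar.map_zero] at hc
    omega
  · rcases quadraticChar_dichotomy ha with h | h <;> rw [h] at hc <;> omega

lemma card_affine_curve_mod_two (hF : ringChar F ≠ 2) (f : F → F) :
    Nat.card {xy : F × F // xy.2 ^ 2 = f xy.1} % 2 = Nat.card {x : F // f x = 0} % 2 := by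
  classical
  let e : {xy : F × F // xy.2 ^ 2 = f xy.1} ≃ Σ x : F, {y : F // y ^ 2 = f x} :=
    { toFun := fun s => ⟨s.1.1, s.1.2, s.2⟩
      invFun := fun s => ⟨(s.1, s.2.1), s.2.2⟩
      left_inv := fun _ => rfl
      right_inv := fun _ => rfl }
  rw [Nat.card_congr e, Nat.card_sigma, Finset.sum_nat_mod,
    Finset.sum_congr rfl fun x _ => card_sq_eq_mod_two hF (f x), Finset.sum_boole,
    Nat.card_eq_fintype_card, Fintype.card_subtype]
  simp

lemma even_card_roots_quadratic (hF : ringChar F ≠ 2) (b c : F) (hdisc : b ^ 2 - 4 * c ≠ 0) :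
    Even (Nat.card {x : F // x ^ 2 + b * x + c = 0}) := by
  classical
  have h2 : (2 : F) ≠ 0 := Ring.two_ne_zero hF
  have h4 : (4 : F) ≠ 0 := by
    simpa only [show (2 : F) * 2 = 4 by norm_num] using mul_ne_zero h2 h2
  -- completing the square: `4 (x² + b x + c) = (2x + b)² - (b² - 4c)`
  let e : {x : F // x ^ 2 + b * x + c = 0} ≃ {y : F // y ^ 2 = b ^ 2 - 4 * c} :=
    ((Equiv.mulLeft₀ 2 h2).trans (Equiv.addRight b)).subtypeEquiv fun x => by
      change _ ↔ (2 * x + b) ^ 2 = _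
      constructor
      · intro h
        linear_combination 4 * h
      · intro h
        have : 4 * (x ^ 2 + b * x + c) = 0 := by linear_combination h
        simpa [h4] using this
  rw [Nat.card_congr e, Nat.even_iff, card_sq_eq_mod_two hF, if_neg hdisc]

lemma odd_card_roots_cubic (hF : ringChar F ≠ 2) (a b x₀ : F) (hroot : x₀ ^ 3 + a * x₀ + b = 0)
    (hdisc : 4 * a ^ 3 + 27 * b ^ 2 ≠ 0) :
    Odd (Nat.card {x : F // x ^ 3 + a * x + b = 0}) := by
  have hfactor : 4 * a ^ 3 + 27 * b ^ 2 = (3 * x₀ ^ 2 + a) ^ 2 * (3 * x₀ ^ 2 + 4 * a) := by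
    linear_combination (27 * b - 27 * x₀ ^ 3 - 27 * a * x₀) * hroot
  rw [hfactor] at hdisc
  have hq_x₀ : x₀ ^ 2 + x₀ * x₀ + (x₀ ^ 2 + a) ≠ 0 := by
    intro h
    exact hdisc (by linear_combination (3 * x₀ ^ 2 + a) * (3 * x₀ ^ 2 + 4 * a) * h)
  have hq_disc : x₀ ^ 2 - 4 * (x₀ ^ 2 + a) ≠ 0 := by
    intro h
    exact hdisc (by linear_combination -(3 * x₀ ^ 2 + a) ^ 2 * h)
  have hroots : {x : F | x ^ 3 + a * x + b = 0}
      = insert x₀ {x : F | x ^ 2 + x₀ * x + (x₀ ^ 2 + a) = 0} := by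
    ext x
    have : x ^ 3 + a * x + b = (x - x₀) * (x ^ 2 + x₀ * x + (x₀ ^ 2 + a)) := by
      linear_combination hroot
    simp only [Set.mem_ofPred_eq, Set.mem_insert_iff, this, mul_eq_zero, sub_eq_zero]
  change Odd (Set.ncard {x : F | x ^ 3 + a * x + b = 0})
  rw [hroots, Set.ncard_insert_of_notMem (s := {x : F | x ^ 2 + x₀ * x + (x₀ ^ 2 + a) = 0}) hq_x₀]
  exact (even_card_roots_quadratic hF _ _ hq_disc).add_one

end RootParity

theorem stmt_16_general (u : ℤ) (p : ℕ) (hp : p.Prime)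
    (hgood : ¬ ((p : ℤ) ∣ -(2 ^ 6 * 3 ^ 5) * u ^ 6))
    (m : ℤ) (hm : (3 : ZMod p) = (m : ZMod p) ^ 3) :
    ((-(m * u) - m ^ 2 * u : ℤ) : ZMod p) ^ 3
        - 9 * (u : ZMod p) ^ 2 * ((-(m * u) - m ^ 2 * u : ℤ) : ZMod p)
        + 12 * (u : ZMod p) ^ 3 = 0 ∧
    Even (1 + Nat.card {xy : ZMod p × ZMod p //
      xy.2 ^ 2 = xy.1 ^ 3 - 9 * (u : ZMod p) ^ 2 * xy.1 + 12 * (u : ZMod p) ^ 3}) := by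
  have : Fact p.Prime := ⟨hp⟩
  set x₀ : ZMod p := ((-(m * u) - m ^ 2 * u : ℤ) : ZMod p)
  have hroot : x₀ ^ 3 - 9 * (u : ZMod p) ^ 2 * x₀ + 12 * (u : ZMod p) ^ 3 = 0 := by
    simp only [x₀]
    push_cast
    -- `(-m - m²)³ - 9(-m - m²) + 12 = (3 - m³)(m³ + 3m² + 3m + 4)`
    linear_combination ((u : ZMod p) ^ 3 * ((m : ZMod p) ^ 3 + 3 * m ^ 2 + 3 * m + 4)) * hm
  have hΔ : ((-(2 ^ 6 * 3 ^ 5) * u ^ 6 : ℤ) : ZMod p) ≠ 0 :=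
    fun h => hgood ((ZMod.intCast_zmod_eq_zero_iff_dvd _ p).mp h)
  push_cast at hΔ
  have hchar : ringChar (ZMod p) ≠ 2 := by
    rw [ZMod.ringChar_zmod_n]
    rintro rfl
    exact hΔ (by linear_combination (-(2 ^ 5 * 3 ^ 5) * (u : ZMod 2) ^ 6) * ZMod.natCast_self 2)
  have hdisc : 4 * (-(9 * (u : ZMod p) ^ 2)) ^ 3 + 27 * (12 * (u : ZMod p) ^ 3) ^ 2 ≠ 0 :=
    fun h => hΔ (by linear_combination (-16) * h)
  have hodd : Odd (Nat.card
      {x : ZMod p // x ^ 3 - 9 * (u : ZMod p) ^ 2 * x + 12 * (u : ZMod p) ^ 3 = 0}) := by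
    simpa only [neg_mul, ← sub_eq_add_neg] using
      odd_card_roots_cubic hchar _ _ x₀ (by linear_combination hroot) hdisc
  have hparity := card_affine_curve_mod_two hchar
    (fun x => x ^ 3 - 9 * (u : ZMod p) ^ 2 * x + 12 * (u : ZMod p) ^ 3)
  beta_reduce at hparity
  refine ⟨hroot, ?_⟩
  rw [Nat.odd_iff] at hodd
  rw [Nat.even_iff]
  omega

/-- If `3 ≡ m³ (mod p)` for a good prime `p` of `E_u : y² = x³ - 9u²x + 12u³`, then
`(-mu - m²u, 0)` is a 2-torsion point of `E_u` over `𝔽_p`; in particular `#E_u(𝔽_p)` is even. -/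
theorem stmt_16 (u : ℤ) (hu : u ≠ 0) (p : ℕ) (hp : p.Prime)
    (hgood : ¬ ((p : ℤ) ∣ -(2 ^ 6 * 3 ^ 5) * u ^ 6))
    (m : ℤ) (hm : (3 : ZMod p) = (m : ZMod p) ^ 3) :
    ((-(m * u) - m ^ 2 * u : ℤ) : ZMod p) ^ 3
        - 9 * (u : ZMod p) ^ 2 * ((-(m * u) - m ^ 2 * u : ℤ) : ZMod p)
        + 12 * (u : ZMod p) ^ 3 = 0 ∧
    Even (1 + Nat.card {xy : ZMod p × ZMod p //
      xy.2 ^ 2 = xy.1 ^ 3 - 9 * (u : ZMod p) ^ 2 * xy.1 + 12 * (u : ZMod p) ^ 3}) :=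
  stmt_16_general u p hp hgood m hm
end

section
/- Over a field F of characteristic not 2 or 3 in which 3 is not a cube, the quartic f(x) = x⁴ − 18v x² + 48v^{3/2}·x − 27v² cannot factor as a product of two quadratics of the form (x² − Ax + B)(x² + Ax + C) with A ≠ 0. More precisely: for the polynomial f(x) = x⁴ − 18u²x² + 48u³x − 27u⁴ over 𝔽_p with u ≠ 0 and p a prime such that 3 is not a cubic residue mod p, if f = (x² − Ax + B)(x² + Ax + C) with A, B, C ∈ 𝔽_p and A ≠ 0, then setting a = A² and v = u², the relation ((a − 12v)/(4v))³ = 9 holds, which forces ((a−12v)²/(3·(4v)²))³ = 3, contradicting the assumption on p. -/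
open Polynomial

/-!
Comparing coefficients of `(x² - Ax + B)(x² + Ax + C)` with the quartic gives
`B + C - A² = -18u²`, `A(B - C) = 48u³` and `BC = -27u⁴`. Eliminating `B` and `C` through
`A²((B + C)² - (B - C)²) = 4A²·BC` leaves a cubic in `a = A²` which is exactly
`(a - 12u²)³ = 9(4u²)³`. Since `9² = 3·3³`, squaring turns this into a cube root of `3`.
-/

section Coefficients

variable {R : Type*} [CommRing R]

theorem quadratic_mul_quadratic (A B C : R) :
    (X ^ 2 - Polynomial.C A * X + Polynomial.C B) * (X ^ 2 + Polynomial.C A * X + Polynomial.C C)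
      = X ^ 4 + Polynomial.C (B + C - A ^ 2) * X ^ 2 + Polynomial.C (A * (B - C)) * X
        + Polynomial.C (B * C) := by
  simp only [map_add, map_sub, map_mul, map_pow]
  ring

theorem coeffs_eq_of_depressed_quartic_eq {a b c a' b' c' : R}
    (h : (X ^ 4 + Polynomial.C a * X ^ 2 + Polynomial.C b * X + Polynomial.C c : R[X])
      = X ^ 4 + Polynomial.C a' * X ^ 2 + Polynomial.C b' * X + Polynomial.C c') :
    a = a' ∧ b = b' ∧ c = c' := by
  refine ⟨?_, ?_, ?_⟩
  · simpa [coeff_X_pow, coeff_X, coeff_C] using congrArg (coeff · 2) h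
  · simpa [coeff_X_pow, coeff_X, coeff_C] using congrArg (coeff · 1) h
  · simpa [coeff_X_pow, coeff_X, coeff_C] using congrArg (coeff · 0) h

theorem cube_eq_of_quadratic_factor_coeffs {A B C u : R}
    (h₂ : B + C - A ^ 2 = -(18 * u ^ 2)) (h₁ : A * (B - C) = 48 * u ^ 3)
    (h₀ : B * C = -(27 * u ^ 4)) :
    (A ^ 2 - 12 * u ^ 2) ^ 3 = 9 * (4 * u ^ 2) ^ 3 := by
  linear_combination (A * (B - C) + 48 * u ^ 3) * h₁ + 4 * A ^ 2 * h₀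
    - A ^ 2 * (A ^ 2 - 18 * u ^ 2 + B + C) * h₂

end Coefficients

theorem three_ne_zero_of_not_exists_cube {R : Type*} [Semiring R] (h : ¬∃ m : R, m ^ 3 = 3) :
    (3 : R) ≠ 0 :=
  fun h₃ => h ⟨0, by simp [h₃]⟩

theorem two_ne_zero_of_not_exists_cube {R : Type*} [CommRing R] (h : ¬∃ m : R, m ^ 3 = 3) :
    (2 : R) ≠ 0 :=
  fun h₂ => h ⟨1, by linear_combination -h₂⟩

section Field

variable {K : Type*} [Field K]

theorem div_pow_three_eq_nine {x y : K} (hy : y ≠ 0) (h : x ^ 3 = 9 * y ^ 3) :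
    (x / y) ^ 3 = 9 := by
  rw [div_pow, h]
  field_simp

theorem sq_div_pow_three_eq_three {x y : K} (h₃ : (3 : K) ≠ 0) (hy : y ≠ 0)
    (h : x ^ 3 = 9 * y ^ 3) :
    (x ^ 2 / (3 * y ^ 2)) ^ 3 = 3 := by
  rw [div_pow, ← pow_mul, show 2 * 3 = 3 * 2 from rfl, pow_mul, h]
  field_simp
  ring

end Field

theorem stmt_18_general (p : ℕ) [Fact p.Prime]
    (hcube : ¬ ∃ m : ZMod p, m ^ 3 = 3)
    (u : ZMod p) (hu : u ≠ 0) (A B C : ZMod p)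
    (hf : (X ^ 4 - Polynomial.C (18 * u ^ 2) * X ^ 2 + Polynomial.C (48 * u ^ 3) * X
          - Polynomial.C (27 * u ^ 4) : Polynomial (ZMod p))
        = (X ^ 2 - Polynomial.C A * X + Polynomial.C B)
          * (X ^ 2 + Polynomial.C A * X + Polynomial.C C)) :
    ((A ^ 2 - 12 * u ^ 2) / (4 * u ^ 2)) ^ 3 = 9 ∧
    ((A ^ 2 - 12 * u ^ 2) ^ 2 / (3 * (4 * u ^ 2) ^ 2)) ^ 3 = 3 ∧
    False := by
  rw [quadratic_mul_quadratic] at hf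
  obtain ⟨h₂, h₁, h₀⟩ := coeffs_eq_of_depressed_quartic_eq
    (a := -(18 * u ^ 2)) (b := 48 * u ^ 3) (c := -(27 * u ^ 4))
    (by rw [← hf, map_neg, map_neg]; ring)
  have hcubic := cube_eq_of_quadratic_factor_coeffs h₂.symm h₁.symm h₀.symm
  have hv : (4 * u ^ 2 : ZMod p) ≠ 0 := by
    have h₄ : (4 : ZMod p) = 2 ^ 2 := by norm_num
    rw [h₄]
    exact mul_ne_zero (pow_ne_zero 2 (two_ne_zero_of_not_exists_cube hcube)) (pow_ne_zero 2 hu)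
  have cube_root := sq_div_pow_three_eq_three (three_ne_zero_of_not_exists_cube hcube) hv hcubic
  exact ⟨div_pow_three_eq_nine hv hcubic, cube_root, hcube ⟨_, cube_root⟩⟩

/-- Over `𝔽_p` with `3` not a cubic residue and `u ≠ 0`, the quartic
`x⁴ - 18u²x² + 48u³x - 27u⁴` cannot factor as `(x² - Ax + B)(x² + Ax + C)` with `A ≠ 0`:
such a factorization would force (with `a = A²`, `v = u²`) `((a - 12v)/(4v))³ = 9`, hence
`((a - 12v)²/(3(4v)²))³ = 3`, contradicting the assumption on `p`. -/
theorem stmt_18 (p : ℕ) [Fact p.Prime]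
    (hcube : ¬ ∃ m : ZMod p, m ^ 3 = 3)
    (u : ZMod p) (hu : u ≠ 0) (A B C : ZMod p) (hA : A ≠ 0)
    (hf : (X ^ 4 - Polynomial.C (18 * u ^ 2) * X ^ 2 + Polynomial.C (48 * u ^ 3) * X
          - Polynomial.C (27 * u ^ 4) : Polynomial (ZMod p))
        = (X ^ 2 - Polynomial.C A * X + Polynomial.C B)
          * (X ^ 2 + Polynomial.C A * X + Polynomial.C C)) :
    ((A ^ 2 - 12 * u ^ 2) / (4 * u ^ 2)) ^ 3 = 9 ∧
    ((A ^ 2 - 12 * u ^ 2) ^ 2 / (3 * (4 * u ^ 2) ^ 2)) ^ 3 = 3 ∧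
    False :=
  stmt_18_general p hcube u hu A B C hf
end
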